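/- Let h be the sparsified h-wave table for strings A, B with parameter ℓ, where in addition to the ℓ-step transitions, h[i,j] may be set to h[i-1,j] + d whenever ED(A[h[i-1,j]+1, h[i-1,j]+d], B[h[i-1,j]+j+1, h[i-1,j]+j+d]) ≤ 10ℓ. Then for all i, j with h[i,j] ≠ -∞, we have ED(A[1, h[i,j]], B[1, h[i,j]+j]) ≤ 10iℓ + |j|. -/

import Mathlib

/-!
Every transition of the table appends a pair of windows to the current pair of prefixes
`A[1, h]`, `B[1, h + j]`, and edit distance is subadditive under concatenation. An `ℓ`-step
appends windows of total length at most `3ℓ` while changing `|j|` by at most `ℓ`, and a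
shortcut appends windows within distance `10ℓ`; so each row adds at most `10ℓ`.
-/

/-- Costs of the edit operations (as `Levenshtein.Cost` in the older Mathlib). -/
structure Levenshtein.Cost (α β δ : Type*) where
  delete : α → δ
  insert : β → δ
  substitute : α → β → δ

/-- Unit costs (as `Levenshtein.defaultCost` in the older Mathlib). -/
def Levenshtein.defaultCost {α : Type*} [DecidableEq α] : Levenshtein.Cost α α ℕ where
  delete _ := 1
  insert _ := 1
  substitute a b := if a = b then 0 else 1

/-- Levenshtein distance, by the recurrence the older Mathlib proved for `levenshtein`. -/
def levenshtein {α β δ : Type*} [AddZeroClass δ] [Min δ] (C : Levenshtein.Cost α β δ) :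
    List α → List β → δ
  | [], ys => (ys.map C.insert).sum
  | x :: xs, [] => C.delete x + levenshtein C xs []
  | x :: xs, y :: ys => min (C.delete x + levenshtein C xs (y :: ys))
      (min (C.insert y + levenshtein C (x :: xs) ys) (C.substitute x y + levenshtein C xs ys))

/-- Edit distance (Levenshtein distance with unit costs). -/
def ED {α : Type*} [DecidableEq α] (A B : List α) : ℕ :=
  levenshtein Levenshtein.defaultCost A B

section EditDistance

variable {α : Type*} [DecidableEq α]

@[simp] theorem ED_nil_nil : ED ([] : List α) [] = 0 := by
  simp [ED, levenshtein]

theorem ED_nil_cons (y : α) (ys : List α) : ED [] (y :: ys) = ED [] ys + 1 := by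
  simp [ED, levenshtein, Levenshtein.defaultCost, add_comm]

theorem ED_cons_nil (x : α) (xs : List α) : ED (x :: xs) [] = ED xs [] + 1 := by
  simp [ED, levenshtein, Levenshtein.defaultCost, add_comm]

theorem ED_cons_cons (x y : α) (xs ys : List α) :
    ED (x :: xs) (y :: ys) = min (ED xs (y :: ys) + 1)
      (min (ED (x :: xs) ys + 1) (ED xs ys + if x = y then 0 else 1)) := by
  simp only [ED, levenshtein, Levenshtein.defaultCost, add_comm]

theorem ED_cons_left_le (x : α) (xs ys : List α) : ED (x :: xs) ys ≤ ED xs ys + 1 := by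
  cases ys with
  | nil => rw [ED_cons_nil]
  | cons y ys => rw [ED_cons_cons]; omega

theorem ED_cons_right_le (xs : List α) (y : α) (ys : List α) :
    ED xs (y :: ys) ≤ ED xs ys + 1 := by
  cases xs with
  | nil => rw [ED_nil_cons]
  | cons x xs => rw [ED_cons_cons]; omega

theorem ED_le_length_add_length (a b : List α) : ED a b ≤ a.length + b.length := by
  induction a generalizing b with
  | nil =>
    induction b with
    | nil => simp
    | cons y ys ih => rw [ED_nil_cons, List.length_cons]; omega
  | cons x xs ih =>
    have := ED_cons_left_le x xs b
    have := ih b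
    rw [List.length_cons]; omega

theorem ED_append_le (a b c e : List α) : ED (a ++ c) (b ++ e) ≤ ED a b + ED c e := by
  induction a generalizing b with
  | nil =>
    induction b with
    | nil => simp
    | cons y ys ih =>
      have := ED_cons_right_le c y (ys ++ e)
      rw [ED_nil_cons, List.nil_append, List.cons_append]
      rw [List.nil_append] at ih
      omega
  | cons x xs ihx =>
    induction b with
    | nil =>
      have := ED_cons_left_le x (xs ++ c) e
      have := ihx []
      rw [ED_cons_nil, List.nil_append, List.cons_append]
      rw [List.nil_append] at this
      omega
    | cons y ys ihy =>
      have := ihx (y :: ys)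
      have := ihx ys
      simp only [List.cons_append, ED_cons_cons] at *
      split_ifs <;> omega

theorem ED_take_add_le (A B : List α) (m n a b : ℕ) :
    ED (A.take (m + a)) (B.take (n + b)) ≤
      ED (A.take m) (B.take n) + ED ((A.drop m).take a) ((B.drop n).take b) := by
  rw [List.take_add, List.take_add]
  exact ED_append_le _ _ _ _

/-- `A[1, v]` and `B[1, v + j]` are within edit distance `c`; the lengths are required to be
nonnegative, since `Int.toNat` would silently truncate them. -/
def PrefixesWithin (A B : List α) (j c v : ℤ) : Prop :=
  0 ≤ v ∧ 0 ≤ v + j ∧ (ED (A.take v.toNat) (B.take (v + j).toNat) : ℤ) ≤ c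

namespace PrefixesWithin

variable {A B : List α} {j j' c c' v w : ℤ}

theorem mono (hw : PrefixesWithin A B j c v) (hc : c ≤ c') : PrefixesWithin A B j c' v :=
  ⟨hw.1, hw.2.1, hw.2.2.trans hc⟩

theorem extend (a b : ℕ) (hw : PrefixesWithin A B j' c w) (hv : v = w + a)
    (hvj : v + j = w + j' + b) :
    PrefixesWithin A B j
      (c + ED ((A.drop w.toNat).take a) ((B.drop (w + j').toNat).take b)) v := by
  obtain ⟨hw0, hwj, hED⟩ := hw
  refine ⟨by omega, by omega, ?_⟩
  have hA : v.toNat = w.toNat + a := by omega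
  have hB : (v + j).toNat = (w + j').toNat + b := by omega
  have := ED_take_add_le A B w.toNat (w + j').toNat a b
  rw [hA, hB]
  omega

theorem extend_le (a b : ℕ) (hw : PrefixesWithin A B j' c w) (hv : v = w + a)
    (hvj : v + j = w + j' + b) (hc : c + a + b ≤ c') : PrefixesWithin A B j c' v := by
  refine (hw.extend a b hv hvj).mono ?_
  have := ED_le_length_add_length ((A.drop w.toNat).take a) ((B.drop (w + j').toNat).take b)
  have := List.length_take_le a (A.drop w.toNat)
  have := List.length_take_le b (B.drop (w + j').toNat)
  omega

end PrefixesWithin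

end EditDistance

theorem WithBot.exists_eq_coe_of_add_coe_eq_coe {M : Type*} [Add M] {x : WithBot M} {c v : M}
    (h : x + (c : WithBot M) = v) : ∃ w : M, x = w ∧ v = w + c := by
  obtain ⟨w, c', rfl, hc, rfl⟩ := WithBot.add_eq_coe.mp h
  exact ⟨w, rfl, by rw [WithBot.coe_inj.mp hc]⟩

theorem hwave_invariant_general {α : Type*} [DecidableEq α] (k ℓ : ℕ)
    (A B : List α) (h : ℕ → ℤ → WithBot ℤ)
    (h00 : h 0 0 = (0 : ℤ))
    (h0 : ∀ j : ℤ, j ≠ 0 → h 0 j = ⊥)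
    (htrans : ∀ i : ℕ, ∀ j : ℤ, 1 ≤ i → i ≤ k → (ℓ : ℤ) ∣ j → |j| ≤ (k : ℤ) →
      h i j ≠ ⊥ →
      (h i j = h (i - 1) j + ((ℓ : ℤ) : WithBot ℤ)) ∨
      (-(k : ℤ) ≤ j - ℓ ∧ h i j = h (i - 1) (j - ℓ) + ((ℓ : ℤ) : WithBot ℤ)) ∨
      (j + ℓ ≤ (k : ℤ) ∧ h i j = h (i - 1) (j + ℓ) + ((ℓ : ℤ) : WithBot ℤ)) ∨
      (∃ d : ℕ, h i j = h (i - 1) j + ((d : ℤ) : WithBot ℤ) ∧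
        ∀ v : ℤ, h (i - 1) j = (v : WithBot ℤ) →
          ED ((A.drop v.toNat).take d) ((B.drop (v + j).toNat).take d) ≤ 10 * ℓ)) :
    ∀ i : ℕ, ∀ j : ℤ, i ≤ k → (ℓ : ℤ) ∣ j → |j| ≤ (k : ℤ) →
      ∀ v : ℤ, h i j = (v : WithBot ℤ) →
      (ED (A.take v.toNat) (B.take (v + j).toNat) : ℤ) ≤ 10 * i * ℓ + |j| := by
  suffices H : ∀ i : ℕ, ∀ j : ℤ, i ≤ k → (ℓ : ℤ) ∣ j → |j| ≤ (k : ℤ) →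
      ∀ v : ℤ, h i j = v → PrefixesWithin A B j (10 * i * ℓ + |j|) v from
    fun i j hi hdvd hj v hv => (H i j hi hdvd hj v hv).2.2
  intro i
  induction i with
  | zero =>
    intro j _ _ _ v hv
    obtain rfl : j = 0 := by_contra fun hj => by simp [h0 j hj] at hv
    obtain rfl : v = 0 := by simpa [h00] using hv.symm
    simp [PrefixesWithin]
  | succ n ih =>
    intro j hn hdvd hj v hv
    have prev : ∀ j' : ℤ, (ℓ : ℤ) ∣ j' → |j'| ≤ k → ∀ c : ℤ, h n j' + (c : WithBot ℤ) = v →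
        ∃ w : ℤ, h n j' = w ∧ v = w + c ∧ PrefixesWithin A B j' (10 * n * ℓ + |j'|) w :=
      fun j' hdvd' hj' c hc =>
        have ⟨w, hw, hvw⟩ := WithBot.exists_eq_coe_of_add_coe_eq_coe hc
        ⟨w, hw, hvw, ih j' (by omega) hdvd' hj' w hw⟩
    have hℓ : |(ℓ : ℤ)| = ℓ := abs_of_nonneg (by positivity)
    rcases htrans (n + 1) j (by omega) hn hdvd hj (by simp [hv]) with
      hc | ⟨hjℓ, hc⟩ | ⟨hjℓ, hc⟩ | ⟨d, hc, hwin⟩ <;> rw [hv] at hc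
    · obtain ⟨w, -, rfl, hw⟩ := prev j hdvd hj ℓ hc.symm
      exact hw.extend_le ℓ ℓ rfl (by ring) (by push_cast; linarith)
    · have hj' : |j - ℓ| ≤ k := abs_le.mpr ⟨hjℓ, by linarith [le_abs_self j]⟩
      obtain ⟨w, -, rfl, hw⟩ := prev (j - ℓ) (dvd_sub hdvd dvd_rfl) hj' ℓ hc.symm
      exact hw.extend_le ℓ (2 * ℓ) rfl (by push_cast; ring)
        (by push_cast; linarith [abs_sub j (ℓ : ℤ)])
    · have hj' : |j + ℓ| ≤ k := abs_le.mpr ⟨by linarith [neg_abs_le j], hjℓ⟩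
      obtain ⟨w, -, rfl, hw⟩ := prev (j + ℓ) (dvd_add hdvd dvd_rfl) hj' ℓ hc.symm
      exact hw.extend_le ℓ 0 rfl (by push_cast; ring)
        (by push_cast; linarith [abs_add_le j (ℓ : ℤ)])
    · obtain ⟨w, hw', rfl, hw⟩ := prev j hdvd hj d hc.symm
      have hwin' := hwin w hw'
      zify at hwin'
      exact (hw.extend d d rfl (by ring)).mono (by push_cast; linarith)

/-- Invariant of the sparsified h-wave with shortcut transitions (Lemma A.4): in the
table `h : ℕ → ℤ → WithBot ℤ` (value `⊥` denoting `-∞`, cells indexed by `i ∈ [0,k]`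
and `j` a multiple of `ℓ` in `[-k,k]`), where each finite cell with `i ≥ 1` arises from
one of the allowed transitions — an `ℓ`-step from `j`, `j-ℓ` or `j+ℓ`, or a shortcut
`h[i-1,j] + d` whose corresponding windows of `A` and `B` are within edit distance
`10ℓ` — every finite value `h[i,j] = v` satisfies
`ED(A[1,v], B[1,v+j]) ≤ 10iℓ + |j|`.  (Prefixes are expressed with `List.take`.) -/
theorem hwave_invariant {α : Type*} [DecidableEq α] (k ℓ : ℕ) (hℓ : 1 ≤ ℓ)
    (A B : List α) (h : ℕ → ℤ → WithBot ℤ)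
    (h00 : h 0 0 = (0 : ℤ))
    (h0 : ∀ j : ℤ, j ≠ 0 → h 0 j = ⊥)
    (htrans : ∀ i : ℕ, ∀ j : ℤ, 1 ≤ i → i ≤ k → (ℓ : ℤ) ∣ j → |j| ≤ (k : ℤ) →
      h i j ≠ ⊥ →
      (h i j = h (i - 1) j + ((ℓ : ℤ) : WithBot ℤ)) ∨
      (-(k : ℤ) ≤ j - ℓ ∧ h i j = h (i - 1) (j - ℓ) + ((ℓ : ℤ) : WithBot ℤ)) ∨
      (j + ℓ ≤ (k : ℤ) ∧ h i j = h (i - 1) (j + ℓ) + ((ℓ : ℤ) : WithBot ℤ)) ∨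
      (∃ d : ℕ, h i j = h (i - 1) j + ((d : ℤ) : WithBot ℤ) ∧
        ∀ v : ℤ, h (i - 1) j = (v : WithBot ℤ) →
          ED ((A.drop v.toNat).take d) ((B.drop (v + j).toNat).take d) ≤ 10 * ℓ)) :
    ∀ i : ℕ, ∀ j : ℤ, i ≤ k → (ℓ : ℤ) ∣ j → |j| ≤ (k : ℤ) →
      ∀ v : ℤ, h i j = (v : WithBot ℤ) →
      (ED (A.take v.toNat) (B.take (v + j).toNat) : ℤ) ≤ 10 * i * ℓ + |j| :=
  hwave_invariant_general k ℓ A B h h00 h0 htrans
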